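/- Let G : Ω → 𝔻 be a nowhere-holomorphic C² function on an open set Ω ⊆ ℂ satisfying the translator equation (Gauss), and define φ = (φ₁, φ₂, φ₃) := (2·conj(G)_z / (|G|⁴ − 1))·(1 − G², i(1 + G²), 2G) : Ω → ℂ³. Then at every point of Ω: (nullity) φ₁² + φ₂² + φ₃² = 0; (non-degeneracy) |φ₁|² + |φ₂|² + |φ₃|² > 0; and (integrability) the Wirtinger derivatives (φ₁)_z̄, (φ₂)_z̄, (φ₃)_z̄ are all real-valued. -/

import Mathlib

open Complex ComplexConjugate

/-- Wirtinger derivative `∂h/∂z = ½(∂h/∂u − i ∂h/∂v)` of a map `h : ℂ → ℂ`. -/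
noncomputable def wz (h : ℂ → ℂ) (z : ℂ) : ℂ :=
  (1 / 2) * (fderiv ℝ h z 1 - Complex.I * fderiv ℝ h z Complex.I)

/-- Wirtinger derivative `∂h/∂z̄ = ½(∂h/∂u + i ∂h/∂v)` of a map `h : ℂ → ℂ`. -/
noncomputable def wzb (h : ℂ → ℂ) (z : ℂ) : ℂ :=
  (1 / 2) * (fderiv ℝ h z 1 + Complex.I * fderiv ℝ h z Complex.I)

/-- Wirtinger derivative `∂x/∂z` of a real-valued map `x : ℂ → ℝ`. -/
noncomputable def wzR (x : ℂ → ℝ) (z : ℂ) : ℂ :=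
  (1 / 2) * (((fderiv ℝ x z 1 : ℝ) : ℂ) - Complex.I * ((fderiv ℝ x z Complex.I : ℝ) : ℂ))

/-- The translator equation (Gauss) for `G : Ω → 𝔻`:
`G_{zz̄} + 2(conj(G)|G|²/(1 − |G|⁴))·G_z·G_z̄ + 2(G/(1 − |G|⁴))·|G_z̄|² = 0`. -/
def GaussEq (G : ℂ → ℂ) (z : ℂ) : Prop :=
  wz (wzb G) z
    + 2 * (conj (G z) * (Complex.normSq (G z) : ℂ)
        / (1 - (Complex.normSq (G z) : ℂ) ^ 2)) * wz G z * wzb G z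
    + 2 * (G z / (1 - (Complex.normSq (G z) : ℂ) ^ 2)) * (Complex.normSq (wzb G z) : ℂ) = 0

/-- The null curve `φ = (2·conj(G)_z/(|G|⁴ − 1))·(1 − G², i(1 + G²), 2G)` in `ℂ³`. -/
noncomputable def phi3 (G : ℂ → ℂ) (z : ℂ) : Fin 3 → ℂ :=
  ![(2 * wz (fun w => conj (G w)) z / ((Complex.normSq (G z) : ℂ) ^ 2 - 1)) * (1 - (G z) ^ 2),
    (2 * wz (fun w => conj (G w)) z / ((Complex.normSq (G z) : ℂ) ^ 2 - 1))
      * (Complex.I * (1 + (G z) ^ 2)),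
    (2 * wz (fun w => conj (G w)) z / ((Complex.normSq (G z) : ℂ) ^ 2 - 1)) * (2 * G z)]

/-!
Write `φ = F · (1 − G², i(1 + G²), 2G)` with `F = 2 conj(G_z̄)/(|G|⁴ − 1)`. The vector
`(1 − g², i(1 + g²), 2g)` is null and has squared length `2(1 + |g|²)²`; this gives nullity and,
since `F ≠ 0` when `G_z̄ ≠ 0`, non-degeneracy.

For integrability, the conjugate of (Gauss) expresses `(conj G_z̄)_z̄` through `G`, `G_z`, `G_z̄`,
and after substituting it the `G_z`-terms of `F_z̄` cancel:
`F_z̄ = 4|G_z̄|² conj(G)(1 − |G|²)/(|G|⁴ − 1)²`. By the product rule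
`φ_z̄ = 4|G_z̄|²/(1 − |G|⁴) · N(G)`, where `N : ℂ → S²` is the inverse stereographic projection,
so `φ_z̄` is real.
-/

section WirtingerCalculus
variable {h h₁ h₂ : ℂ → ℂ} {z : ℂ}

lemma fderiv_conj_apply (v : ℂ) :
    fderiv ℝ (fun w => conj (h w)) z v = conj (fderiv ℝ h z v) := by
  change fderiv ℝ (fun w => star (h w)) z v = star (fderiv ℝ h z v)
  rw [fderiv_star]
  rfl

lemma wzb_conj : wzb (fun w => conj (h w)) z = conj (wz h z) := by
  simp only [wzb, wz, fderiv_conj_apply, map_mul, map_sub, map_div₀, map_one, map_ofNat, conj_I]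
  ring

lemma wz_conj : wz (fun w => conj (h w)) z = conj (wzb h z) := by
  simp only [wzb, wz, fderiv_conj_apply, map_mul, map_add, map_div₀, map_one, map_ofNat, conj_I]
  ring

lemma DifferentiableAt.conj (hd : DifferentiableAt ℝ h z) :
    DifferentiableAt ℝ (fun w => conj (h w)) z :=
  hd.star

lemma wzb_mul (h₁d : DifferentiableAt ℝ h₁ z) (h₂d : DifferentiableAt ℝ h₂ z) :
    wzb (fun w => h₁ w * h₂ w) z = wzb h₁ z * h₂ z + h₁ z * wzb h₂ z := by
  simp only [wzb, fderiv_fun_mul h₁d h₂d, add_apply, smul_apply, smul_eq_mul]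
  ring

lemma wzb_comp_of_hasDerivAt {f : ℂ → ℂ} {f' : ℂ} (hf : HasDerivAt f f' (h z))
    (hd : DifferentiableAt ℝ h z) :
    wzb (fun w => f (h w)) z = f' * wzb h z := by
  have H : HasFDerivAt (fun w => f (h w)) (f' • fderiv ℝ h z) z :=
    hf.comp_hasFDerivAt z hd.hasFDerivAt
  simp only [wzb, H.fderiv, smul_apply, smul_eq_mul]
  ring

lemma differentiableAt_normSq (hd : DifferentiableAt ℝ h z) :
    DifferentiableAt ℝ (fun w => (normSq (h w) : ℂ)) z := by
  simp only [← mul_conj]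
  exact hd.mul hd.conj

lemma wzb_normSq (hd : DifferentiableAt ℝ h z) :
    wzb (fun w => (normSq (h w) : ℂ)) z = wzb h z * conj (h z) + h z * conj (wz h z) := by
  simp only [← mul_conj]
  rw [wzb_mul hd hd.conj, wzb_conj]

lemma ContDiffAt.differentiableAt_wzb (hh : ContDiffAt ℝ 2 h z) :
    DifferentiableAt ℝ (wzb h) z := by
  have : DifferentiableAt ℝ (fderiv ℝ h) z :=
    (hh.fderiv_right (m := 1) (by norm_num)).differentiableAt one_ne_zero
  unfold wzb
  fun_prop

end WirtingerCalculus

lemma normSq_sq_sub_one_ne_zero {g : ℂ} (hg : normSq g ≠ 1) : (normSq g : ℂ) ^ 2 - 1 ≠ 0 := by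
  have : normSq g ^ 2 - 1 ≠ 0 := by
    nlinarith [normSq_nonneg g, mul_self_pos.2 (sub_ne_zero.2 hg)]
  exact_mod_cast this

def weierstrassDir (g : ℂ) : Fin 3 → ℂ := ![1 - g ^ 2, I * (1 + g ^ 2), 2 * g]

def weierstrassDirDeriv (g : ℂ) : Fin 3 → ℂ := ![-(2 * g), I * (2 * g), 2]

lemma hasDerivAt_weierstrassDir (g : ℂ) (k : Fin 3) :
    HasDerivAt (fun x => weierstrassDir x k) (weierstrassDirDeriv g k) g := by
  have hsq : HasDerivAt (fun x : ℂ => x ^ 2) (2 * g) g := by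
    simpa using hasDerivAt_pow 2 g
  fin_cases k
  · simpa [weierstrassDir, weierstrassDirDeriv] using hsq.const_sub 1
  · simpa [weierstrassDir, weierstrassDirDeriv] using (hsq.const_add 1).const_mul I
  · simpa [weierstrassDir, weierstrassDirDeriv] using (hasDerivAt_id g).const_mul 2

lemma sum_weierstrassDir_sq (g : ℂ) : ∑ k, weierstrassDir g k ^ 2 = 0 := by
  simp only [Fin.sum_univ_three, weierstrassDir, Matrix.cons_val]
  linear_combination (1 + g ^ 2) ^ 2 * I_sq

lemma sum_normSq_weierstrassDir (g : ℂ) :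
    ∑ k, normSq (weierstrassDir g k) = 2 * (1 + normSq g) ^ 2 := by
  simp [Fin.sum_univ_three, weierstrassDir, normSq_apply, pow_two]
  ring

/-- The inverse of the stereographic projection of the unit sphere from `(0, 0, 1)`. -/
noncomputable def invStereographic (g : ℂ) : Fin 3 → ℝ :=
  (1 + normSq g)⁻¹ • ![2 * g.re, 2 * g.im, normSq g - 1]

noncomputable def gaussFactor (G : ℂ → ℂ) (z : ℂ) : ℂ :=
  2 * wz (fun w => conj (G w)) z / ((normSq (G z) : ℂ) ^ 2 - 1)

section GaussFactor
variable {G : ℂ → ℂ} {z : ℂ}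

lemma phi3_apply (k : Fin 3) : phi3 G z k = gaussFactor G z * weierstrassDir (G z) k := by
  fin_cases k <;> rfl

lemma gaussFactor_eq :
    gaussFactor G = fun w => 2 * conj (wzb G w) / ((normSq (G w) : ℂ) ^ 2 - 1) := by
  funext w
  rw [gaussFactor, wz_conj]

lemma gaussFactor_ne_zero (hB : wzb G z ≠ 0) (hr : normSq (G z) ≠ 1) : gaussFactor G z ≠ 0 := by
  rw [gaussFactor_eq]
  exact div_ne_zero (mul_ne_zero two_ne_zero ((map_ne_zero _).2 hB)) (normSq_sq_sub_one_ne_zero hr)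

lemma differentiableAt_gaussFactor (hG : DifferentiableAt ℝ G z)
    (hB : DifferentiableAt ℝ (wzb G) z) (hr : normSq (G z) ≠ 1) :
    DifferentiableAt ℝ (gaussFactor G) z := by
  rw [gaussFactor_eq]
  simp only [div_eq_mul_inv]
  exact (hB.conj.const_mul 2).mul
    ((((differentiableAt_normSq hG).fun_pow 2).sub_const 1).fun_inv (normSq_sq_sub_one_ne_zero hr))

lemma GaussEq.wz_wzb (hGauss : GaussEq G z) (hr : normSq (G z) ≠ 1) :
    wz (wzb G) z = 2 * (conj (G z) * normSq (G z) * wz G z * wzb G z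
      + G z * normSq (wzb G z)) / ((normSq (G z) : ℂ) ^ 2 - 1) := by
  have hQ := normSq_sq_sub_one_ne_zero hr
  have hQ' : (1 : ℂ) - (normSq (G z) : ℂ) ^ 2 ≠ 0 := by
    rw [← neg_sub]; exact neg_ne_zero.2 hQ
  rw [eq_div_iff hQ]
  unfold GaussEq at hGauss
  field_simp at hGauss
  linear_combination -hGauss

lemma wzb_gaussFactor (hG : DifferentiableAt ℝ G z) (hB : DifferentiableAt ℝ (wzb G) z)
    (hr : normSq (G z) ≠ 1) (hGauss : GaussEq G z) :
    wzb (gaussFactor G) z = 4 * normSq (wzb G z) * conj (G z) * (1 - normSq (G z))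
      / ((normSq (G z) : ℂ) ^ 2 - 1) ^ 2 := by
  have hQ := normSq_sq_sub_one_ne_zero hr
  have hsq : HasDerivAt (fun x : ℂ => x ^ 2 - 1) (2 * (normSq (G z) : ℂ)) (normSq (G z) : ℂ) := by
    simpa using (hasDerivAt_pow 2 (normSq (G z) : ℂ)).sub_const 1
  have hf := (hsq.fun_inv hQ).const_mul 2
  have hF : gaussFactor G = fun w => conj (wzb G w) * (2 * ((normSq (G w) : ℂ) ^ 2 - 1)⁻¹) := by
    rw [gaussFactor_eq]; funext w; ring
  have hfd : DifferentiableAt ℝ (fun w => 2 * ((normSq (G w) : ℂ) ^ 2 - 1)⁻¹) z :=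
    (hf.differentiableAt.restrictScalars ℝ).comp (g := fun x : ℂ => 2 * (x ^ 2 - 1)⁻¹) z
      (differentiableAt_normSq hG)
  rw [hF, wzb_mul hB.conj hfd, wzb_conj, wzb_comp_of_hasDerivAt hf (differentiableAt_normSq hG),
    wzb_normSq hG, hGauss.wz_wzb hr]
  simp only [map_div₀, map_mul, map_add, map_sub, map_pow, map_one, map_ofNat, conj_ofReal,
    conj_conj]
  rw [← mul_conj (wzb G z)]
  field_simp
  ring

lemma wzb_phi3 (hG : DifferentiableAt ℝ G z) (hB : DifferentiableAt ℝ (wzb G) z)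
    (hr : normSq (G z) ≠ 1) (hGauss : GaussEq G z) (k : Fin 3) :
    wzb (fun w => phi3 G w k) z
      = ((4 * normSq (wzb G z) / (1 - normSq (G z) ^ 2) * invStereographic (G z) k : ℝ) : ℂ) := by
  have hdir := hasDerivAt_weierstrassDir (G z) k
  have hdird : DifferentiableAt ℝ (fun w => weierstrassDir (G w) k) z :=
    (hdir.differentiableAt.restrictScalars ℝ).comp (g := fun x => weierstrassDir x k) z hG
  rw [funext fun w => phi3_apply (G := G) (z := w) k,
    wzb_mul (differentiableAt_gaussFactor hG hB hr) hdird, wzb_comp_of_hasDerivAt hdir hG,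
    wzb_gaussFactor hG hB hr hGauss, gaussFactor_eq]
  have hQ : conj (G z) ^ 2 * G z ^ 2 - 1 ≠ 0 := by
    rw [← mul_pow, mul_comm, mul_conj]; exact normSq_sq_sub_one_ne_zero hr
  have hQ' : 1 - conj (G z) ^ 2 * G z ^ 2 ≠ 0 := by
    rw [← neg_sub]; exact neg_ne_zero.2 hQ
  have hp : 1 + conj (G z) * G z ≠ 0 := by
    rw [mul_comm, mul_conj]
    exact_mod_cast (add_pos_of_pos_of_nonneg one_pos (normSq_nonneg (G z))).ne'
  fin_cases k <;>
    simp only [invStereographic, weierstrassDir, weierstrassDirDeriv, Pi.smul_apply, smul_eq_mul,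
      Fin.zero_eta, Fin.mk_one, Fin.reduceFinMk, Matrix.cons_val] <;>
    push_cast <;>
    simp only [re_eq_add_conj, im_eq_sub_conj, ← mul_conj (wzb G z), ← mul_conj (G z)] <;>
    field_simp
  · ring
  · rw [I_sq]; ring
  · ring

end GaussFactor

/-- **(Theorem, part (a), for `ℝ³`).** If `G : Ω → 𝔻` is nowhere holomorphic, `C²`, and
satisfies the translator equation (Gauss), then the complex curve `φ` is null,
non-degenerate, and its Wirtinger `z̄`-derivatives are real-valued. -/
theorem phi3_null_nondeg_integrable
    (Ω : Set ℂ) (hΩ : IsOpen Ω) (G : ℂ → ℂ)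
    (hG : ContDiffOn ℝ 2 G Ω)
    (hdisc : ∀ z ∈ Ω, ‖G z‖ < 1)
    (hnh : ∀ z ∈ Ω, wzb G z ≠ 0)
    (hGauss : ∀ z ∈ Ω, GaussEq G z) :
    ∀ z ∈ Ω,
      (∑ k : Fin 3, (phi3 G z k) ^ 2 = 0)
      ∧ (0 < ∑ k : Fin 3, Complex.normSq (phi3 G z k))
      ∧ (∀ k : Fin 3, (wzb (fun w => phi3 G w k) z).im = 0) := by
  intro z hz
  have hGz : ContDiffAt ℝ 2 G z := hG.contDiffAt (hΩ.mem_nhds hz)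
  have hr : normSq (G z) ≠ 1 := by
    rw [← Complex.sq_norm]
    exact (pow_lt_one₀ (norm_nonneg _) (hdisc z hz) two_ne_zero).ne
  refine ⟨?_, ?_, fun k => ?_⟩
  · simp only [phi3_apply, mul_pow, ← Finset.mul_sum, sum_weierstrassDir_sq, mul_zero]
  · simp only [phi3_apply, normSq_mul, ← Finset.mul_sum, sum_normSq_weierstrassDir]
    exact mul_pos (normSq_pos.2 (gaussFactor_ne_zero (hnh z hz) hr))
      (by have := normSq_nonneg (G z); positivity)
  · rw [wzb_phi3 (hGz.differentiableAt two_ne_zero) hGz.differentiableAt_wzb hr (hGauss z hz)]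
    exact ofReal_im _
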